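/- The time map T : (0, π/2) → (0, ∞) is strictly increasing; that is, for all α₁, α₂ with 0 < α₁ < α₂ < π/2 one has T(α₁) < T(α₂). -/
import Mathlib

open Real intervalIntegral

/-- The time map `T(α) = ∫₀^α dx / √(cos 2x − cos 2α)`. -/
noncomputable def timeMapT (α : ℝ) : ℝ :=
  ∫ x in (0:ℝ)..α, 1 / Real.sqrt (Real.cos (2 * x) - Real.cos (2 * α))

section aux

open Set MeasureTheory

/-- sinc inequality: for `0 < a < b ≤ π`, `a * sin b < b * sin a`. -/
lemma aux_sinc_lt {a b : ℝ} (ha : 0 < a) (hab : a < b) (hb : b ≤ π) :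
    a * Real.sin b < b * Real.sin a := by
  have hb0 : 0 < b := ha.trans hab
  have hbne : b ≠ 0 := hb0.ne'
  have hp : (0:ℝ) < 1 - a / b := by rw [sub_pos, div_lt_one hb0]; exact hab
  have hq : (0:ℝ) < a / b := by positivity
  have h := strictConcaveOn_sin_Icc.2 (Set.left_mem_Icc.2 Real.pi_pos.le)
    (⟨hb0.le, hb⟩ : b ∈ Set.Icc 0 π) hb0.ne hp hq (by ring)
  simp only [smul_eq_mul, Real.sin_zero, mul_zero, zero_add, zero_mul] at h
  rw [div_mul_cancel₀ _ hbne] at h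
  have h2 := (mul_lt_mul_iff_right₀ hb0).2 h
  rwa [show b * (a / b * Real.sin b) = a * Real.sin b by field_simp] at h2

/-- Factorization of the difference of cosines. -/
lemma aux_cos_factor (α t : ℝ) :
    Real.cos (2 * (α * t)) - Real.cos (2 * α)
      = 2 * Real.sin (α * (1 + t)) * Real.sin (α * (1 - t)) := by
  rw [Real.cos_sub_cos, show (2 * (α * t) + 2 * α) / 2 = α * (1 + t) by ring,
    show (2 * (α * t) - 2 * α) / 2 = -(α * (1 - t)) by ring, Real.sin_neg]
  ring

/-- Lower bound for sin on an interval, via concavity. -/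
lemma aux_sin_lower {u v x : ℝ} (hu : 0 ≤ u) (hv : v ≤ π) (hx : x ∈ Icc u v) :
    min (Real.sin u) (Real.sin v) ≤ Real.sin x := by
  have huv : u ≤ v := hx.1.trans hx.2
  exact strictConcaveOn_sin_Icc.concaveOn.ge_on_segment
    ⟨hu, huv.trans hv⟩ ⟨hu.trans huv, hv⟩
    (by rw [segment_eq_Icc huv]; exact hx)

/-- The substituted integrand. -/
noncomputable def timeF (α t : ℝ) : ℝ :=
  α * (1 / Real.sqrt (Real.cos (2 * (α * t)) - Real.cos (2 * α)))

lemma timeMapT_eq (α : ℝ) : timeMapT α = ∫ t in (0:ℝ)..1, timeF α t := by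
  have h := smul_integral_comp_mul_left
    (fun x => 1 / Real.sqrt (Real.cos (2 * x) - Real.cos (2 * α))) (a := 0) (b := 1) α
  rw [mul_zero, mul_one] at h
  rw [timeMapT, ← h, ← intervalIntegral.integral_smul]
  simp [timeF, smul_eq_mul]

/-- Integrability of the substituted integrand. -/
lemma timeF_integrable {α : ℝ} (hα : 0 < α) (hα' : α < π / 2) :
    IntervalIntegrable (timeF α) volume 0 1 := by
  have hπ := Real.pi_pos
  set m : ℝ := min (Real.sin α) (Real.sin (2 * α)) with hm
  have hm0 : 0 < m := lt_min (Real.sin_pos_of_pos_of_lt_pi hα (by linarith))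
    (Real.sin_pos_of_pos_of_lt_pi (by linarith) (by linarith))
  set c : ℝ := 2 * m * (2 / π * α) with hc
  have hc0 : 0 < c := by positivity
  set C : ℝ := α / Real.sqrt c with hC
  -- the dominating function
  have hg : IntervalIntegrable (fun t : ℝ => C * (1 - t) ^ (-(1/2) : ℝ)) volume 0 1 := by
    have h1 : IntervalIntegrable (fun x : ℝ => x ^ (-(1/2) : ℝ)) volume 0 1 :=
      intervalIntegrable_rpow' (by norm_num)
    have h2 := h1.comp_sub_left 1
    simp only [sub_zero, sub_self] at h2
    exact h2.symm.const_mul C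
  refine hg.mono_fun' ?_ ?_
  · apply Measurable.aestronglyMeasurable
    unfold timeF
    fun_prop
  · rw [Filter.EventuallyLE, ae_restrict_iff' measurableSet_uIoc]
    filter_upwards with t ht
    rw [Set.uIoc_of_le zero_le_one] at ht
    obtain ⟨ht0, ht1⟩ := ht
    have hF0 : 0 ≤ timeF α t := by
      rw [timeF]; positivity
    rw [Real.norm_of_nonneg hF0]
    rcases eq_or_lt_of_le ht1 with h1 | h1
    · -- t = 1 : both sides are 0
      subst h1
      norm_num [timeF, Real.zero_rpow]
    · -- t < 1
      have h1t : 0 < 1 - t := by linarith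
      -- lower bound on the expression under the sqrt
      have hfac := aux_cos_factor α t
      have hs1 : m ≤ Real.sin (α * (1 + t)) :=
        aux_sin_lower (u := α) (v := 2 * α) hα.le (by linarith)
          ⟨by nlinarith, by nlinarith⟩
      have hs2 : 2 / π * (α * (1 - t)) ≤ Real.sin (α * (1 - t)) :=
        Real.mul_le_sin (by nlinarith) (by nlinarith)
      have h2nn : 0 ≤ 2 / π * (α * (1 - t)) := by positivity
      have hD : c * (1 - t) ≤ Real.cos (2 * (α * t)) - Real.cos (2 * α) := by
        rw [hfac, hc]
        nlinarith [mul_le_mul hs1 hs2 h2nn (hm0.le.trans hs1)]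
      have hD0 : 0 < c * (1 - t) := by positivity
      have hsplit : Real.sqrt (c * (1 - t)) = Real.sqrt c * Real.sqrt (1 - t) :=
        Real.sqrt_mul hc0.le _
      have hsD : Real.sqrt (c * (1 - t)) ≤
          Real.sqrt (Real.cos (2 * (α * t)) - Real.cos (2 * α)) :=
        Real.sqrt_le_sqrt hD
      have hsD0 : 0 < Real.sqrt (c * (1 - t)) := Real.sqrt_pos.2 hD0
      have hrw : (1 - t) ^ (-(1/2) : ℝ) = 1 / Real.sqrt (1 - t) := by
        rw [Real.rpow_neg h1t.le, Real.sqrt_eq_rpow]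
        norm_num
      rw [timeF, hrw]
      have hone : 1 / Real.sqrt (Real.cos (2 * (α * t)) - Real.cos (2 * α))
          ≤ 1 / (Real.sqrt c * Real.sqrt (1 - t)) := by
        rw [← hsplit]
        exact one_div_le_one_div_of_le hsD0 hsD
      calc α * (1 / Real.sqrt (Real.cos (2 * (α * t)) - Real.cos (2 * α)))
          ≤ α * (1 / (Real.sqrt c * Real.sqrt (1 - t))) :=
            mul_le_mul_of_nonneg_left hone hα.le
        _ = C * (1 / Real.sqrt (1 - t)) := by rw [hC]; ring

/-- Pointwise strict monotonicity of the substituted integrand. -/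
lemma timeF_lt {α₁ α₂ t : ℝ} (h₁ : 0 < α₁) (h₁₂ : α₁ < α₂) (h₂ : α₂ < π / 2)
    (ht : t ∈ Set.Ioo (0:ℝ) 1) : timeF α₁ t < timeF α₂ t := by
  obtain ⟨ht0, ht1⟩ := ht
  have hπ := Real.pi_pos
  set a₁ := α₁ * (1 + t) with ha₁
  set a₂ := α₂ * (1 + t) with ha₂
  set b₁ := α₁ * (1 - t) with hb₁
  set b₂ := α₂ * (1 - t) with hb₂
  have hp1 : 0 < a₁ := by rw [ha₁]; nlinarith
  have hp2 : a₁ < a₂ := by rw [ha₁, ha₂]; nlinarith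
  have hp3 : a₂ < π := by rw [ha₂]; nlinarith
  have hq1 : 0 < b₁ := by rw [hb₁]; nlinarith
  have hq2 : b₁ < b₂ := by rw [hb₁, hb₂]; nlinarith
  have hq3 : b₂ < π := by rw [hb₂]; nlinarith
  have key1 : a₁ * Real.sin a₂ < a₂ * Real.sin a₁ := aux_sinc_lt hp1 hp2 hp3.le
  have key2 : b₁ * Real.sin b₂ < b₂ * Real.sin b₁ := aux_sinc_lt hq1 hq2 hq3.le
  have hsin1 : 0 < Real.sin a₁ := Real.sin_pos_of_pos_of_lt_pi hp1 (hp2.trans hp3)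
  have hsin2 : 0 < Real.sin a₂ := Real.sin_pos_of_pos_of_lt_pi (hp1.trans hp2) hp3
  have hsinb1 : 0 < Real.sin b₁ := Real.sin_pos_of_pos_of_lt_pi hq1 (hq2.trans hq3)
  have hsinb2 : 0 < Real.sin b₂ := Real.sin_pos_of_pos_of_lt_pi (hq1.trans hq2) hq3
  -- reduce the inequalities to the α's
  have k1 : α₁ * Real.sin a₂ < α₂ * Real.sin a₁ := by
    have h1t : (0:ℝ) < 1 + t := by linarith
    rw [ha₁, ha₂] at key1
    nlinarith
  have k2 : α₁ * Real.sin b₂ < α₂ * Real.sin b₁ := by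
    have h1t : (0:ℝ) < 1 - t := by linarith
    rw [hb₁, hb₂] at key2
    nlinarith
  set D₁ := Real.cos (2 * (α₁ * t)) - Real.cos (2 * α₁) with hD₁
  set D₂ := Real.cos (2 * (α₂ * t)) - Real.cos (2 * α₂) with hD₂
  have hD₁f : D₁ = 2 * Real.sin a₁ * Real.sin b₁ := aux_cos_factor α₁ t
  have hD₂f : D₂ = 2 * Real.sin a₂ * Real.sin b₂ := aux_cos_factor α₂ t
  have hD₁0 : 0 < D₁ := by rw [hD₁f]; positivity
  have hD₂0 : 0 < D₂ := by rw [hD₂f]; positivity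
  have key : α₁ ^ 2 * D₂ < α₂ ^ 2 * D₁ := by
    rw [hD₁f, hD₂f]
    nlinarith [mul_lt_mul'' k1 k2 (mul_pos h₁ hsin2).le (mul_pos h₁ hsinb2).le]
  have hsqrt : α₁ * Real.sqrt D₂ < α₂ * Real.sqrt D₁ := by
    have h := Real.sqrt_lt_sqrt (by positivity) key
    rwa [Real.sqrt_mul (sq_nonneg _), Real.sqrt_mul (sq_nonneg _),
      Real.sqrt_sq h₁.le, Real.sqrt_sq (h₁.trans h₁₂).le] at h
  have hs1 : 0 < Real.sqrt D₁ := Real.sqrt_pos.2 hD₁0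
  have hs2 : 0 < Real.sqrt D₂ := Real.sqrt_pos.2 hD₂0
  rw [timeF, timeF, ← hD₁, ← hD₂, mul_one_div, mul_one_div, div_lt_div_iff₀ hs1 hs2]
  exact hsqrt

end aux

/-- The time map `T` is strictly increasing on `(0, π/2)`. -/
theorem timeMapT_strictMono (α₁ α₂ : ℝ) (h₁ : 0 < α₁) (h₁₂ : α₁ < α₂)
    (h₂ : α₂ < π / 2) : timeMapT α₁ < timeMapT α₂ := by
  have hi₁ : IntervalIntegrable (timeF α₁) MeasureTheory.volume 0 1 :=
    timeF_integrable h₁ (h₁₂.trans h₂)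
  have hi₂ : IntervalIntegrable (timeF α₂) MeasureTheory.volume 0 1 :=
    timeF_integrable (h₁.trans h₁₂) h₂
  rw [timeMapT_eq, timeMapT_eq, ← sub_pos, ← intervalIntegral.integral_sub hi₂ hi₁]
  exact intervalIntegral_pos_of_pos_on (hi₂.sub hi₁)
    (fun t ht => sub_pos.2 (timeF_lt h₁ h₁₂ h₂ ht)) one_pos
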